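/- Let $h:[0,\infty)\to[0,\infty)$ be non-increasing, let $r>0$ and $1\le\alpha<\infty$. Then there exists $C=C(r,\alpha)>0$ such that for every $\lambda>0$, $\Big[\int_{\lambda}^{\infty}(t^{r}h(t))^{\alpha}\,\frac{dt}{t}\Big]^{1/\alpha}\le \lambda^{r}h(\lambda)+C\int_{\lambda}^{\infty}t^{r}h(t)\,\frac{dt}{t}.$ -/

import Mathlib

open MeasureTheory

private lemma aux_rpow_int (r : ℝ) (hr : 0 < r) {lam t : ℝ} (hlam : 0 < lam) (hlt : lam < t) :
    ∫⁻ s in Set.Ioc lam t, ENNReal.ofReal (s ^ (r - 1)) =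
      ENNReal.ofReal ((t ^ r - lam ^ r) / r) := by
  have hle := hlt.le
  have hii : IntervalIntegrable (fun s : ℝ => s ^ (r - 1)) volume lam t :=
    intervalIntegral.intervalIntegrable_rpow' (by linarith)
  have hint : IntegrableOn (fun s : ℝ => s ^ (r - 1)) (Set.Ioc lam t) := by
    rwa [intervalIntegrable_iff_integrableOn_Ioc_of_le hle] at hii
  rw [← ofReal_integral_eq_lintegral_ofReal hint ?_]
  · congr 1
    rw [← intervalIntegral.integral_of_le hle,
      integral_rpow (Or.inl (by linarith : (-1 : ℝ) < r - 1)),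
      show r - 1 + 1 = r by ring]
  · filter_upwards [ae_restrict_mem measurableSet_Ioc] with s hs using
      Real.rpow_nonneg (le_of_lt (hlam.trans hs.1)) _

/-- Reverse-Hölder variant for non-increasing (distribution-type) functions, `α < ∞`. -/
theorem stmt1 (r α : ℝ) (hr : 0 < r) (hα : 1 ≤ α) :
    ∃ C : ℝ, 0 < C ∧ ∀ h : ℝ → ℝ, (∀ t, 0 ≤ h t) → AntitoneOn h (Set.Ici 0) →
      ∀ lam : ℝ, 0 < lam →
      (∫⁻ t in Set.Ioi lam, ENNReal.ofReal ((t ^ r * h t) ^ α / t)) ^ (1 / α) ≤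
        ENNReal.ofReal (lam ^ r * h lam) +
          ENNReal.ofReal C * ∫⁻ t in Set.Ioi lam, ENNReal.ofReal (t ^ r * h t / t) := by
  refine ⟨r + 1, by linarith, ?_⟩
  intro h h0 hmono lam hlam
  set A : ENNReal := ENNReal.ofReal (lam ^ r * h lam) with hA
  set I : ENNReal := ∫⁻ t in Set.Ioi lam, ENNReal.ofReal (t ^ r * h t / t) with hI
  by_cases hItop : I = ⊤
  · have : ENNReal.ofReal (r + 1) * I = ⊤ := by
      rw [hItop, ENNReal.mul_top]
      simp [ENNReal.ofReal_eq_zero]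
      linarith
    rw [this]
    simp
  set M : ENNReal := A + ENNReal.ofReal r * I with hM
  have hMtop : M ≠ ⊤ := by
    rw [hM]
    exact ENNReal.add_ne_top.2 ⟨ENNReal.ofReal_ne_top, ENNReal.mul_ne_top ENNReal.ofReal_ne_top hItop⟩
  -- pointwise bound
  have pt : ∀ t ∈ Set.Ioi lam, ENNReal.ofReal (t ^ r * h t) ≤ M := by
    intro t ht
    have hlt : lam < t := ht
    have ht0 : 0 < t := hlam.trans hlt
    have hpow : lam ^ r ≤ t ^ r := Real.rpow_le_rpow hlam.le hlt.le hr.le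
    have key : ENNReal.ofReal ((t ^ r - lam ^ r) * h t) ≤ ENNReal.ofReal r * I := by
      have e1 := aux_rpow_int r hr hlam hlt
      have step1 : ENNReal.ofReal ((t ^ r - lam ^ r) * h t) =
          ENNReal.ofReal r * ∫⁻ s in Set.Ioc lam t, ENNReal.ofReal (h t * s ^ (r - 1)) := by
        have : ∀ s : ℝ, ENNReal.ofReal (h t * s ^ (r - 1)) =
            ENNReal.ofReal (h t) * ENNReal.ofReal (s ^ (r - 1)) := fun s =>
          ENNReal.ofReal_mul (h0 t)
        simp_rw [this]
        rw [lintegral_const_mul' _ _ ENNReal.ofReal_ne_top, e1,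
          ← ENNReal.ofReal_mul (h0 t), ← ENNReal.ofReal_mul hr.le]
        congr 1
        field_simp
      rw [step1]
      refine mul_le_mul_right ?_ _
      refine le_trans (lintegral_mono_ae ?_)
        (lintegral_mono_set (Set.Ioc_subset_Ioi_self : Set.Ioc lam t ⊆ Set.Ioi lam))
      filter_upwards [ae_restrict_mem measurableSet_Ioc] with s hs
      have hs0 : 0 < s := hlam.trans hs.1
      have hhts : h t ≤ h s := hmono (Set.mem_Ici.2 hs0.le) (Set.mem_Ici.2 ht0.le) hs.2
      refine ENNReal.ofReal_le_ofReal ?_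
      have : s ^ r * h s / s = h s * s ^ (r - 1) := by
        rw [Real.rpow_sub hs0, Real.rpow_one]
        field_simp
      rw [this]
      exact mul_le_mul_of_nonneg_right hhts (Real.rpow_nonneg hs0.le _)
    have split : ENNReal.ofReal (t ^ r * h t) =
        ENNReal.ofReal (lam ^ r * h t) + ENNReal.ofReal ((t ^ r - lam ^ r) * h t) := by
      rw [← ENNReal.ofReal_add (mul_nonneg (Real.rpow_nonneg hlam.le _) (h0 t))
        (mul_nonneg (by linarith) (h0 t))]
      ring_nf
    rw [split, hM]
    refine add_le_add ?_ key
    refine ENNReal.ofReal_le_ofReal ?_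
    exact mul_le_mul_of_nonneg_left
      (hmono (Set.mem_Ici.2 hlam.le) (Set.mem_Ici.2 ht0.le) hlt.le) (Real.rpow_nonneg hlam.le _)
  -- step B
  set J : ENNReal := ∫⁻ t in Set.Ioi lam, ENNReal.ofReal ((t ^ r * h t) ^ α / t) with hJ
  have hMpow_top : M ^ (α - 1) ≠ ⊤ := by
    exact ENNReal.rpow_ne_top_of_nonneg (by linarith) hMtop
  have stepB : J ≤ M ^ (α - 1) * I := by
    rw [hJ, hI, ← lintegral_const_mul' _ _ hMpow_top]
    refine lintegral_mono_ae ?_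
    filter_upwards [ae_restrict_mem measurableSet_Ioi] with t ht
    have hlt : lam < t := ht
    have ht0 : 0 < t := hlam.trans hlt
    have hx0 : 0 ≤ t ^ r * h t := mul_nonneg (Real.rpow_nonneg ht0.le _) (h0 t)
    have hid : (t ^ r * h t) ^ α / t = (t ^ r * h t) ^ (α - 1) * (t ^ r * h t / t) := by
      rcases eq_or_lt_of_le hx0 with hx | hx
      · rw [← hx, Real.zero_rpow (by linarith : α ≠ 0)]
        simp
      · rw [mul_div_assoc']
        congr 1
        rw [← Real.rpow_add_one (ne_of_gt hx), sub_add_cancel]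
    rw [hid, ENNReal.ofReal_mul (Real.rpow_nonneg hx0 _),
      ← ENNReal.ofReal_rpow_of_nonneg hx0 (by linarith : (0:ℝ) ≤ α - 1)]
    exact mul_le_mul_left (ENNReal.rpow_le_rpow (pt t ht) (by linarith)) _
  -- conclude
  have hα0 : (0:ℝ) < α := by linarith
  by_cases hI0 : I = 0
  · have hJ0 : J = 0 := le_antisymm (by simpa [hI0] using stepB) (zero_le)
    rw [hJ0, ENNReal.zero_rpow_of_pos (by positivity)]
    exact zero_le
  · have hM0 : M ≠ 0 := by
      rw [hM]
      intro hc
      have := add_eq_zero.1 hc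
      have h2 := this.2
      rw [mul_eq_zero] at h2
      rcases h2 with h2 | h2
      · rw [ENNReal.ofReal_eq_zero] at h2; linarith
      · exact hI0 h2
    have hMI0 : M + I ≠ 0 := by
      simp [hM0]
    have hMItop : M + I ≠ ⊤ := ENNReal.add_ne_top.2 ⟨hMtop, hItop⟩
    calc J ^ (1 / α) ≤ (M ^ (α - 1) * I) ^ (1 / α) :=
          ENNReal.rpow_le_rpow stepB (by positivity)
      _ = M ^ ((α - 1) * (1 / α)) * I ^ (1 / α) := by
          rw [ENNReal.mul_rpow_of_nonneg _ _ (by positivity), ← ENNReal.rpow_mul]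
      _ ≤ (M + I) ^ ((α - 1) * (1 / α)) * (M + I) ^ (1 / α) := by
          refine mul_le_mul' (ENNReal.rpow_le_rpow (le_add_right le_rfl) ?_)
            (ENNReal.rpow_le_rpow (le_add_left le_rfl) (by positivity))
          have : (0:ℝ) < 1/α := by positivity
          nlinarith
      _ = (M + I) ^ ((α - 1) * (1 / α) + 1 / α) := by
          rw [← ENNReal.rpow_add _ _ hMI0 hMItop]
      _ = M + I := by
          rw [show (α - 1) * (1 / α) + 1 / α = 1 by field_simp; ring, ENNReal.rpow_one]
      _ = A + ENNReal.ofReal (r + 1) * I := by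
          rw [hM, ENNReal.ofReal_add hr.le zero_le_one, ENNReal.ofReal_one, add_mul,
            one_mul, add_assoc]
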